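/- Let n > 0, γ > 1, k > 1, C₇ ≥ 0, C₆ ≥ 0, and let u : [0, ∞) → ℝ be differentiable with u'(t) ≤ −u(t)/n + C₇·e^{-γt/n} + C₆·e^{-kt/n} for all t ≥ 0. Then for all t ≥ 0, u(t) ≤ (u(0) + nC₇/(γ − 1) + nC₆/(k − 1))·e^{-t/n} − (nC₇/(γ − 1))·e^{-γt/n} − (nC₆/(k − 1))·e^{-kt/n}. -/
import Mathlib

/-- Derivative of `t ↦ exp (c * t / n)`. -/
lemma hasDerivAt_exp_lin (c n t : ℝ) :
    HasDerivAt (fun s : ℝ => Real.exp (c * s / n)) (Real.exp (c * t / n) * (c / n)) t := by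
  have h : HasDerivAt (fun s : ℝ => c * s / n) (c / n) t := by
    simpa using ((hasDerivAt_id t).const_mul c).div_const n
  simpa using h.exp

/-- Linear ODE comparison with two exponentially decaying forcing terms, giving
the uniform lower bound on the mean curvature. -/
theorem mean_curvature_lower_ode (n γ k C₇ C₆ : ℝ) (hn : 0 < n) (hγ : 1 < γ)
    (hk : 1 < k) (hC₇ : 0 ≤ C₇) (hC₆ : 0 ≤ C₆) (u : ℝ → ℝ)
    (hdiff : ∀ t : ℝ, 0 ≤ t → DifferentiableAt ℝ u t)
    (hineq : ∀ t : ℝ, 0 ≤ t →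
      deriv u t ≤ -u t / n + C₇ * Real.exp (-γ * t / n) + C₆ * Real.exp (-k * t / n)) :
    ∀ t : ℝ, 0 ≤ t →
      u t ≤ (u 0 + n * C₇ / (γ - 1) + n * C₆ / (k - 1)) * Real.exp (-t / n)
        - (n * C₇ / (γ - 1)) * Real.exp (-γ * t / n)
        - (n * C₆ / (k - 1)) * Real.exp (-k * t / n) := by
  set A : ℝ := n * C₇ / (γ - 1) with hA
  set B : ℝ := n * C₆ / (k - 1) with hB
  have hγ1 : (0:ℝ) < γ - 1 := by linarith
  have hk1 : (0:ℝ) < k - 1 := by linarith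
  set g : ℝ → ℝ := fun s =>
    u s * Real.exp (1 * s / n) + A * Real.exp (-(γ - 1) * s / n)
      + B * Real.exp (-(k - 1) * s / n) with hg
  -- g has explicit derivative at each t ≥ 0
  have hgderiv : ∀ t : ℝ, 0 ≤ t → HasDerivAt g
      (deriv u t * Real.exp (1 * t / n) + u t * (Real.exp (1 * t / n) * (1 / n))
        + A * (Real.exp (-(γ - 1) * t / n) * (-(γ - 1) / n))
        + B * (Real.exp (-(k - 1) * t / n) * (-(k - 1) / n))) t := by
    intro t ht
    have h1 := ((hdiff t ht).hasDerivAt).mul (hasDerivAt_exp_lin 1 n t)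
    have h2 := (hasDerivAt_exp_lin (-(γ - 1)) n t).const_mul A
    have h3 := (hasDerivAt_exp_lin (-(k - 1)) n t).const_mul B
    exact (h1.add h2).add h3
  -- derivative of g is ≤ 0 on (0, ∞)
  have hderiv_le : ∀ t : ℝ, 0 ≤ t → deriv g t ≤ 0 := by
    intro t ht
    rw [(hgderiv t ht).deriv]
    have hE : (0:ℝ) < Real.exp (1 * t / n) := Real.exp_pos _
    have hiq := hineq t ht
    have eγ : Real.exp (-γ * t / n) * Real.exp (1 * t / n) = Real.exp (-(γ - 1) * t / n) := by
      rw [← Real.exp_add]; ring_nf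
    have ek : Real.exp (-k * t / n) * Real.exp (1 * t / n) = Real.exp (-(k - 1) * t / n) := by
      rw [← Real.exp_add]; ring_nf
    have hAeq : A * ((γ - 1) / n) = C₇ := by
      rw [hA]; field_simp
    have hBeq : B * ((k - 1) / n) = C₆ := by
      rw [hB]; field_simp
    have key : deriv u t * Real.exp (1 * t / n)
        ≤ -u t / n * Real.exp (1 * t / n) + C₇ * Real.exp (-(γ - 1) * t / n)
          + C₆ * Real.exp (-(k - 1) * t / n) := by
      have := mul_le_mul_of_nonneg_right hiq hE.le
      calc deriv u t * Real.exp (1 * t / n)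
          ≤ (-u t / n + C₇ * Real.exp (-γ * t / n) + C₆ * Real.exp (-k * t / n))
              * Real.exp (1 * t / n) := this
        _ = -u t / n * Real.exp (1 * t / n)
              + C₇ * (Real.exp (-γ * t / n) * Real.exp (1 * t / n))
              + C₆ * (Real.exp (-k * t / n) * Real.exp (1 * t / n)) := by ring
        _ = _ := by rw [eγ, ek]
    have h4 : A * (Real.exp (-(γ - 1) * t / n) * (-(γ - 1) / n))
        = -(C₇ * Real.exp (-(γ - 1) * t / n)) := by rw [← hAeq]; ring
    have h5 : B * (Real.exp (-(k - 1) * t / n) * (-(k - 1) / n))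
        = -(C₆ * Real.exp (-(k - 1) * t / n)) := by rw [← hBeq]; ring
    have h6 : u t * (Real.exp (1 * t / n) * (1 / n)) = -(-u t / n * Real.exp (1 * t / n)) := by
      field_simp
    linarith [key, h4, h5, h6]
  -- g is antitone on [0, ∞)
  have hanti : AntitoneOn g (Set.Ici (0:ℝ)) := by
    apply antitoneOn_of_deriv_nonpos (convex_Ici 0)
    · intro t ht
      exact ((hgderiv t ht).differentiableAt).continuousAt.continuousWithinAt
    · intro t ht
      rw [interior_Ici] at ht
      exact ((hgderiv t (le_of_lt ht)).differentiableAt).differentiableWithinAt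
    · intro t ht
      rw [interior_Ici] at ht
      exact hderiv_le t (le_of_lt ht)
  intro t ht
  have hle : g t ≤ g 0 := hanti Set.self_mem_Ici ht ht
  have hg0 : g 0 = u 0 + A + B := by simp [hg]
  rw [hg0] at hle
  -- unfold g t
  have hgt : g t = u t * Real.exp (1 * t / n) + A * Real.exp (-(γ - 1) * t / n)
      + B * Real.exp (-(k - 1) * t / n) := rfl
  rw [hgt] at hle
  have hE : (0:ℝ) < Real.exp (1 * t / n) := Real.exp_pos _
  have eγ : Real.exp (-(γ - 1) * t / n) = Real.exp (-γ * t / n) * Real.exp (1 * t / n) := by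
    rw [← Real.exp_add]; ring_nf
  have ek : Real.exp (-(k - 1) * t / n) = Real.exp (-k * t / n) * Real.exp (1 * t / n) := by
    rw [← Real.exp_add]; ring_nf
  have eneg : Real.exp (-t / n) * Real.exp (1 * t / n) = 1 := by
    rw [← Real.exp_add]; ring_nf; exact Real.exp_zero
  rw [eγ, ek] at hle
  have h := mul_le_mul_of_nonneg_right hle (Real.exp_pos (-t / n)).le
  have hone : Real.exp (1 * t / n) * Real.exp (-t / n) = 1 := by
    rw [← Real.exp_add]; ring_nf; exact Real.exp_zero
  have hsimp : (u t * Real.exp (1 * t / n)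
        + A * (Real.exp (-γ * t / n) * Real.exp (1 * t / n))
        + B * (Real.exp (-k * t / n) * Real.exp (1 * t / n))) * Real.exp (-t / n)
      = u t + A * Real.exp (-γ * t / n) + B * Real.exp (-k * t / n) := by
    linear_combination (u t + A * Real.exp (-γ * t / n) + B * Real.exp (-k * t / n)) * hone
  linarith [h, hsimp]
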